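/- arXiv:2112.13627 — 2 statements merged into one kernel-verified Lean document; each statement's English description precedes it below -/
import Mathlib

section
/- Let A = {n : t_n = 0} be the set of evil numbers and R_2^{(A)}(n) the number of pairs (x,y) ∈ A × A with x < y and x + y = n. Then for all t ≥ 1, R_2^{(A)}(2^t − 1) = 0 if t is odd, and R_2^{(A)}(2^t − 1) = 2^{t−2} if t is even. -/
/-!
Complementing the `t` binary digits of `x < 2 ^ t` turns `x` into `2 ^ t - 1 - x` and changes the
number of ones from `s` to `t - s`, so `tm (2 ^ t - 1 - x) ≡ t + tm x (mod 2)`. Hence when `t` is odd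
no two evil numbers sum to `2 ^ t - 1`, and when `t` is even the evil pairs `x < 2 ^ t - 1 - x` are
given by the evil `x < 2 ^ (t - 1)`. Exactly one of `2k, 2k + 1` is evil, so there are `2 ^ (t - 2)`
of those.
-/

/-- The Thue-Morse sequence: t 0 = 0, t (2n) = t n, t (2n+1) = 1 - t n. -/
def tm (n : ℕ) : ℕ :=
  if h : n = 0 then 0
  else if n % 2 = 0 then tm (n / 2) else 1 - tm (n / 2)
decreasing_by all_goals exact Nat.div_lt_self (Nat.pos_of_ne_zero h) one_lt_two

/-- R₂ for the evil numbers A = {n : t n = 0}. -/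
noncomputable def R2A (n : ℕ) : ℕ :=
  Nat.card {p : ℕ × ℕ | tm p.1 = 0 ∧ tm p.2 = 0 ∧ p.1 < p.2 ∧ p.1 + p.2 = n}

open Finset

lemma tm_zero : tm 0 = 0 := by
  rw [tm]; simp

lemma tm_two_mul (n : ℕ) : tm (2 * n) = tm n := by
  rcases Nat.eq_zero_or_pos n with rfl | hn
  · rfl
  · rw [tm]
    simp [hn.ne']

lemma tm_two_mul_add_one (n : ℕ) : tm (2 * n + 1) = 1 - tm n := by
  rw [tm]
  simp [Nat.add_div]

lemma tm_le_one (n : ℕ) : tm n ≤ 1 := by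
  induction n using Nat.strong_induction_on with
  | _ n ih =>
    rcases Nat.even_or_odd' n with ⟨k, rfl | rfl⟩
    · rcases Nat.eq_zero_or_pos k with rfl | hk
      · simp [tm_zero]
      · rw [tm_two_mul]
        exact ih k (by omega)
    · rw [tm_two_mul_add_one]
      omega

lemma tm_two_pow_sub_one_sub (t : ℕ) {x : ℕ} (hx : x < 2 ^ t) :
    tm (2 ^ t - 1 - x) = (t + tm x) % 2 := by
  induction t generalizing x with
  | zero =>
    obtain rfl : x = 0 := by simpa using hx
    simp [tm_zero]
  | succ t ih =>
    rw [pow_succ] at hx ⊢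
    rcases Nat.even_or_odd' x with ⟨a, rfl | rfl⟩
    · have hcompl : 2 ^ t * 2 - 1 - 2 * a = 2 * (2 ^ t - 1 - a) + 1 := by omega
      rw [hcompl, tm_two_mul_add_one, tm_two_mul, ih (by omega)]
      have := tm_le_one a
      omega
    · have hcompl : 2 ^ t * 2 - 1 - (2 * a + 1) = 2 * (2 ^ t - 1 - a) := by omega
      rw [hcompl, tm_two_mul, tm_two_mul_add_one, ih (by omega)]
      have := tm_le_one a
      omega

lemma card_filter_tm_eq_zero_range_two_mul (m : ℕ) : #{x ∈ range (2 * m) | tm x = 0} = m := by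
  induction m with
  | zero => rfl
  | succ m ih =>
    rw [card_filter] at ih ⊢
    rw [show 2 * (m + 1) = 2 * m + 1 + 1 by ring, sum_range_succ, sum_range_succ, ih, tm_two_mul,
      tm_two_mul_add_one]
    have := tm_le_one m
    split_ifs <;> omega

lemma R2A_eq_card (n : ℕ) :
    R2A n = #{x ∈ range n | tm x = 0 ∧ tm (n - x) = 0 ∧ x < n - x} := by
  rw [R2A, ← Nat.card_eq_finsetCard]
  refine Nat.card_congr
    { toFun := fun p => ⟨p.1.1, ?_⟩
      invFun := fun x => ⟨(x.1, n - x.1), ?_⟩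
      left_inv := fun p => ?_
      right_inv := fun x => rfl }
  · obtain ⟨hx0, hy0, hlt, hsum⟩ := p.2
    have hsnd : n - p.1.1 = p.1.2 := by omega
    simp only [mem_filter, mem_range, hsnd]
    exact ⟨by omega, hx0, hy0, hlt⟩
  · obtain ⟨hx, hx0, hy0, hlt⟩ := mem_filter.1 x.2
    exact ⟨hx0, hy0, hlt, by have := mem_range.1 hx; omega⟩
  · obtain ⟨-, -, -, hsum⟩ := p.2
    ext
    · rfl
    · simp only
      omega

lemma R2A_two_pow_sub_one_of_odd {t : ℕ} (ht : Odd t) : R2A (2 ^ t - 1) = 0 := by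
  rw [R2A_eq_card, card_eq_zero, filter_eq_empty_iff]
  rintro x hx ⟨hx0, hy0, -⟩
  have := tm_two_pow_sub_one_sub t (x := x) (by have := mem_range.1 hx; omega)
  obtain ⟨k, rfl⟩ := ht
  omega

lemma R2A_two_pow_sub_one_of_even {t : ℕ} (ht : Even t) (h2 : 2 ≤ t) :
    R2A (2 ^ t - 1) = 2 ^ (t - 2) := by
  have hpow : 2 ^ t = 2 * (2 * 2 ^ (t - 2)) := by
    rw [← pow_succ', ← pow_succ']
    congr 1
    omega
  have hpairs : {x ∈ range (2 ^ t - 1) | tm x = 0 ∧ tm (2 ^ t - 1 - x) = 0 ∧ x < 2 ^ t - 1 - x} =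
      {x ∈ range (2 * 2 ^ (t - 2)) | tm x = 0} := by
    ext x
    simp only [mem_filter, mem_range]
    constructor
    · rintro ⟨-, hx0, -, hlt⟩
      exact ⟨by omega, hx0⟩
    · rintro ⟨hx, hx0⟩
      have := tm_two_pow_sub_one_sub t (x := x) (by omega)
      obtain ⟨k, rfl⟩ := ht
      exact ⟨by omega, hx0, by omega, by omega⟩
  rw [R2A_eq_card, hpairs, card_filter_tm_eq_zero_range_two_mul]

theorem r2a_pow_sub_one (t : ℕ) (ht : 1 ≤ t) :
    (Odd t → R2A (2 ^ t - 1) = 0) ∧ (Even t → R2A (2 ^ t - 1) = 2 ^ (t - 2)) := by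
  refine ⟨R2A_two_pow_sub_one_of_odd, fun heven => R2A_two_pow_sub_one_of_even heven ?_⟩
  obtain ⟨k, rfl⟩ := heven
  omega
end

section
/- The twisted Thue-Morse sequence t' is computed by the 3-state DFAO with states {0,1,2}, initial state 0, outputs out(0)=1, out(1)=0, out(2)=1, and transitions δ(0,0)=0, δ(0,1)=1, δ(1,0)=2, δ(1,1)=1, δ(2,0)=1, δ(2,1)=2, reading the binary representation of n most-significant-digit first: for all n, t'_n = out(δ*(0, binary representation of n)). -/
def ttm (n : ℕ) : ℕ :=
  if n = 0 then 1
  else if n = 1 then 0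
  else if n % 2 = 0 then 1 - ttm (n / 2) else ttm (n / 2)
decreasing_by all_goals exact Nat.div_lt_self (by omega) one_lt_two

/-- Transition function of the DFAO. -/
def dfaoDelta : ℕ → ℕ → ℕ
  | 0, 0 => 0
  | 0, 1 => 1
  | 1, 0 => 2
  | 1, 1 => 1
  | 2, 0 => 1
  | 2, 1 => 2
  | q, _ => q

/-- Output function of the DFAO. -/
def dfaoOut : ℕ → ℕ
  | 0 => 1
  | 1 => 0
  | 2 => 1
  | _ => 0

/-! The automaton leaves its initial state 0 at the leading digit 1 and from then on sits in
state `t'_m + 1`, where `m` is the prefix read so far: appending a digit `b` takes `m` to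
`2m + b`, and the states 1 and 2 swap exactly on `b = 0`, as `t'` does. -/

theorem ttm_of_two_le {n : ℕ} (hn : 2 ≤ n) :
    ttm n = if n % 2 = 0 then 1 - ttm (n / 2) else ttm (n / 2) := by
  rw [ttm, if_neg (by omega), if_neg (by omega)]

theorem ttm_le_one (n : ℕ) : ttm n ≤ 1 := by
  induction n using Nat.strong_induction_on with
  | _ n ih =>
    rcases Nat.lt_or_ge n 2 with hn | hn
    · interval_cases n <;> simp [ttm]
    · rw [ttm_of_two_le hn]
      split_ifs
      · omega
      · exact ih _ (by omega)

def dfaoState (n : ℕ) : ℕ := ((Nat.digits 2 n).reverse).foldl dfaoDelta 0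

theorem dfaoState_of_ne_zero {n : ℕ} (hn : n ≠ 0) :
    dfaoState n = dfaoDelta (dfaoState (n / 2)) (n % 2) := by
  rw [dfaoState, Nat.digits_def' one_lt_two (Nat.pos_of_ne_zero hn)]
  simp [dfaoState, List.foldl_append]

theorem dfaoDelta_succ {t b : ℕ} (ht : t ≤ 1) (hb : b < 2) :
    dfaoDelta (t + 1) b = (if b = 0 then 1 - t else t) + 1 := by
  interval_cases t <;> interval_cases b <;> rfl

theorem dfaoState_eq_ttm_add_one {n : ℕ} (hn : n ≠ 0) : dfaoState n = ttm n + 1 := by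
  induction n using Nat.strong_induction_on with
  | _ n ih =>
    rcases Nat.lt_or_ge n 2 with h | h
    · obtain rfl : n = 1 := by omega
      simp [dfaoState, dfaoDelta, ttm]
    · rw [dfaoState_of_ne_zero hn, ih (n / 2) (by omega) (by omega),
        dfaoDelta_succ (ttm_le_one _) (Nat.mod_lt n two_pos), ttm_of_two_le h]

/-- The twisted Thue-Morse sequence is computed by the 3-state DFAO, reading the
binary representation of n most-significant-digit first. -/
theorem ttm_dfao (n : ℕ) :
    ttm n = dfaoOut (((Nat.digits 2 n).reverse).foldl dfaoDelta 0) := by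
  change ttm n = dfaoOut (dfaoState n)
  rcases eq_or_ne n 0 with rfl | hn
  · simp [dfaoState, dfaoOut, ttm]
  · rw [dfaoState_eq_ttm_add_one hn]
    rcases Nat.le_one_iff_eq_zero_or_eq_one.mp (ttm_le_one n) with h | h <;> simp [h, dfaoOut]
end
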